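/- arXiv:1703.08638 — 7 statements merged into one kernel-verified Lean document; each statement's English description precedes it below -/
import Mathlib

section
/- Let a > 0, c > 0, μ < 0 and 0 < σ < −μ. Let M ∈ [M₀, 0), N > 0, τ = a + c·N, and suppose φ is continuous with φ(t) ∈ [M, N] for all t ∈ [−τ, 0]. Then every solution u of the SDDE satisfies u(t) ∈ (M, N) for all t > 0. -/
open Real Set Filter

/-- `M₀ = -a/c`. -/
noncomputable def Mzero (a c : ℝ) : ℝ := -a / c

/-- `N₀ = aσ/(cμ)`. -/
noncomputable def Nzero (a c μ σ : ℝ) : ℝ := a * σ / (c * μ)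

/-- A solution of the SDDE `u'(t) = μ u(t) + σ u(t - a - c u(t))` with history `φ`:
a continuous function equal to `φ` on `(-∞,0]`, differentiable on `(0,∞)` with
continuous derivative there, satisfying the SDDE for all `t > 0`. -/
def IsSDDESolution (a c μ σ : ℝ) (φ u : ℝ → ℝ) : Prop :=
  Continuous u ∧ (∀ t ≤ (0:ℝ), u t = φ t) ∧
  ContinuousOn (deriv u) (Set.Ioi (0:ℝ)) ∧
  ∀ t > (0:ℝ), HasDerivAt u (μ * u t + σ * u (t - a - c * u t)) t

open Topology

/-!
While `u` stays in `[M, N]`, the delayed argument `t - a - c u(t)` lies in `[t - τ, t]`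
(this is where `M ≥ M₀` enters), so `σ u(t - a - c u(t)) ∈ [σM, σN]`. Hence at a time where
`u` touches `N` the right-hand side is at most `(μ + σ) N < 0`, and where it touches `M` it is at
least `(μ + σ) M > 0`; by continuous induction `u` never leaves `[M, N]`. Strictness then comes
from an integrating factor: `u' ≤ μ (u - K)` with `K = -σN/μ < N`, so `(u - K) e^{-μt}` is
nonincreasing and `u(t) < N` for `t > 0`; symmetrically `u(t) > M`.
-/

theorem eventually_nhdsGE_le_of_hasDerivAt_neg {f F : ℝ → ℝ} {T : ℝ}
    (hf : ContinuousWithinAt f (Ici T) T) (hderiv : ∀ x > T, HasDerivAt f (F x) x)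
    (hF : ContinuousAt F T) (hFT : F T < 0) : ∀ᶠ x in 𝓝[≥] T, f x ≤ f T := by
  obtain ⟨b, hTb, hneg⟩ := mem_nhdsGE_iff_exists_Ico_subset.1
    (nhdsWithin_le_nhds (hF.eventually (gt_mem_nhds hFT)))
  have hcont : ContinuousOn f (Ico T b) := fun x hx =>
    hx.1.eq_or_lt.elim (fun h => h ▸ hf.mono Ico_subset_Ici_self)
      fun h => (hderiv x h).continuousAt.continuousWithinAt
  have hanti : AntitoneOn f (Ico T b) := by
    refine antitoneOn_of_hasDerivWithinAt_nonpos (f' := F) (convex_Ico T b) hcont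
      (fun x hx => ?_) fun x hx => ?_ <;> rw [interior_Ico] at hx
    · exact (hderiv x hx.1).hasDerivWithinAt
    · exact (hneg (Ioo_subset_Ico_self hx)).le
  filter_upwards [Ico_mem_nhdsGE hTb] with x hx using hanti (left_mem_Ico.2 hTb) hx hx.1

theorem eventually_nhdsGE_ge_of_hasDerivAt_pos {f F : ℝ → ℝ} {T : ℝ}
    (hf : ContinuousWithinAt f (Ici T) T) (hderiv : ∀ x > T, HasDerivAt f (F x) x)
    (hF : ContinuousAt F T) (hFT : 0 < F T) : ∀ᶠ x in 𝓝[≥] T, f T ≤ f x := by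
  filter_upwards [eventually_nhdsGE_le_of_hasDerivAt_neg (f := -f) (F := -F) hf.neg
    (fun x hx => (hderiv x hx).neg) hF.neg (neg_lt_zero.2 hFT)] with x hx
  simpa using hx

theorem antitoneOn_sub_mul_exp_of_hasDerivAt_le {f f' : ℝ → ℝ} {μ K a b : ℝ}
    (hf : ContinuousOn f (Icc a b)) (hderiv : ∀ x ∈ Ioo a b, HasDerivAt f (f' x) x)
    (hle : ∀ x ∈ Ioo a b, f' x ≤ μ * (f x - K)) :
    AntitoneOn (fun x => (f x - K) * exp (-μ * x)) (Icc a b) := by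
  have hg : ∀ x ∈ Ioo a b, HasDerivAt (fun x => (f x - K) * exp (-μ * x))
      ((f' x - μ * (f x - K)) * exp (-μ * x)) x := fun x hx =>
    (((hderiv x hx).sub_const K).fun_mul ((hasDerivAt_id' x).const_mul (-μ)).exp).congr_deriv
      (by ring)
  refine antitoneOn_of_hasDerivWithinAt_nonpos
    (f' := fun x => (f' x - μ * (f x - K)) * exp (-μ * x)) (convex_Icc a b)
    ((hf.sub continuousOn_const).mul (by fun_prop)) (fun x hx => ?_) fun x hx => ?_ <;>
    rw [interior_Icc] at hx
  · exact (hg x hx).hasDerivWithinAt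
  · exact mul_nonpos_of_nonpos_of_nonneg (sub_nonpos.2 (hle x hx)) (exp_pos _).le

theorem lt_of_hasDerivAt_le_mul_sub {f f' : ℝ → ℝ} {μ K N a b : ℝ} (hμ : μ < 0) (hab : a < b)
    (hf : ContinuousOn f (Icc a b)) (hderiv : ∀ x ∈ Ioo a b, HasDerivAt f (f' x) x)
    (hle : ∀ x ∈ Ioo a b, f' x ≤ μ * (f x - K)) (hKN : K < N) (ha : f a ≤ N) : f b < N := by
  have hanti := antitoneOn_sub_mul_exp_of_hasDerivAt_le hf hderiv hle
    (left_mem_Icc.2 hab.le) (right_mem_Icc.2 hab.le) hab.le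
  have hexp : exp (-μ * a) < exp (-μ * b) := exp_lt_exp.2 (by nlinarith)
  by_contra! hb
  nlinarith [mul_le_mul_of_nonneg_right (sub_le_sub_right hb K) (exp_pos (-μ * b)).le,
    mul_le_mul_of_nonneg_right (sub_le_sub_right ha K) (exp_pos (-μ * a)).le,
    mul_lt_mul_of_pos_left hexp (sub_pos.2 hKN)]

section SDDE

variable {a c μ σ M N : ℝ} {u : ℝ → ℝ}

theorem sub_sub_mul_mem_Icc (hc : 0 < c) (hcM : -a ≤ c * M) {t : ℝ} (ht : u t ∈ Icc M N) :
    t - a - c * u t ∈ Icc (t - (a + c * N)) t := by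
  constructor <;> nlinarith [ht.1, ht.2]

theorem eventually_nhdsGE_mem_Icc (hc : 0 < c) (hcM : -a ≤ c * M) (hM : M < 0) (hN : 0 < N)
    (hσ : 0 < σ) (hμσ : μ + σ < 0) (hu : Continuous u)
    (hode : ∀ t > 0, HasDerivAt u (μ * u t + σ * u (t - a - c * u t)) t) {T : ℝ} (hT : 0 ≤ T)
    (hpast : ∀ s ∈ Icc (T - (a + c * N)) T, u s ∈ Icc M N) :
    ∀ᶠ s in 𝓝[≥] T, u s ∈ Icc M N := by
  have hF : ContinuousAt (fun s => μ * u s + σ * u (s - a - c * u s)) T := by fun_prop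
  have hderiv : ∀ s > T, HasDerivAt u (μ * u s + σ * u (s - a - c * u s)) s :=
    fun s hs => hode s (hT.trans_lt hs)
  have huT : u T ∈ Icc M N := hpast T ⟨by nlinarith, le_rfl⟩
  have hdelay := hpast _ (sub_sub_mul_mem_Icc hc hcM huT)
  have hge : ∀ᶠ s in 𝓝[≥] T, M ≤ u s := by
    rcases huT.1.lt_or_eq with hlt | heq
    · exact nhdsWithin_le_nhds (hu.continuousAt.eventually (le_mem_nhds hlt))
    · rw [heq]
      refine eventually_nhdsGE_ge_of_hasDerivAt_pos hu.continuousWithinAt hderiv hF ?_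
      nlinarith [mul_le_mul_of_nonneg_left hdelay.1 hσ.le, mul_pos_of_neg_of_neg hμσ hM]
  have hle : ∀ᶠ s in 𝓝[≥] T, u s ≤ N := by
    rcases huT.2.lt_or_eq with hlt | heq
    · exact nhdsWithin_le_nhds (hu.continuousAt.eventually (ge_mem_nhds hlt))
    · rw [← heq]
      refine eventually_nhdsGE_le_of_hasDerivAt_neg hu.continuousWithinAt hderiv hF ?_
      nlinarith [mul_le_mul_of_nonneg_left hdelay.2 hσ.le, mul_neg_of_neg_of_pos hμσ hN]
  filter_upwards [hge, hle] with s h₁ h₂ using ⟨h₁, h₂⟩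

theorem mem_Icc_of_history (hc : 0 < c) (hcM : -a ≤ c * M) (hM : M < 0) (hN : 0 < N)
    (hσ : 0 < σ) (hμσ : μ + σ < 0) (hu : Continuous u)
    (hode : ∀ t > 0, HasDerivAt u (μ * u t + σ * u (t - a - c * u t)) t)
    (hhist : ∀ s ∈ Icc (-(a + c * N)) 0, u s ∈ Icc M N) :
    ∀ t ≥ -(a + c * N), u t ∈ Icc M N := by
  intro t ht
  rcases le_total t 0 with ht0 | ht0
  · exact hhist t ⟨ht, ht0⟩
  have hclosed : IsClosed (u ⁻¹' Icc M N ∩ Icc 0 t) :=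
    (isClosed_Icc.preimage hu).inter isClosed_Icc
  refine hclosed.Icc_subset_of_forall_mem_nhdsGT_of_Icc_subset
    (hhist 0 ⟨by nlinarith, le_rfl⟩) (fun T hT hsub => ?_) ⟨ht0, le_rfl⟩
  refine nhdsWithin_mono T Ioi_subset_Ici_self
    (eventually_nhdsGE_mem_Icc hc hcM hM hN hσ hμσ hu hode hT.1 fun s hs => ?_)
  rcases le_total s 0 with hs0 | hs0
  · exact hhist s ⟨by linarith [hs.1, hT.1], hs0⟩
  · exact hsub ⟨hs0, hs.2⟩

theorem mem_Ioo_of_forall_mem_Icc (hc : 0 < c) (hcM : -a ≤ c * M) (hM : M < 0) (hN : 0 < N)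
    (hσ : 0 < σ) (hμσ : μ + σ < 0) (hu : Continuous u)
    (hode : ∀ t > 0, HasDerivAt u (μ * u t + σ * u (t - a - c * u t)) t)
    (hinv : ∀ t ≥ -(a + c * N), u t ∈ Icc M N) {t : ℝ} (ht : 0 < t) : u t ∈ Ioo M N := by
  have hμ : μ < 0 := by linarith
  have hdelay : ∀ s ∈ Ioo 0 t, u (s - a - c * u s) ∈ Icc M N := fun s hs =>
    hinv _ (by linarith [(sub_sub_mul_mem_Icc hc hcM (hinv s (by nlinarith [hs.1]))).1, hs.1])
  have hu0 : u 0 ∈ Icc M N := hinv 0 (by nlinarith)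
  constructor
  · refine neg_lt_neg_iff.1 (lt_of_hasDerivAt_le_mul_sub (K := σ * M / μ) hμ ht
      (f := fun s => -u s) hu.neg.continuousOn (fun s hs => (hode s hs.1).neg)
      (fun s hs => ?_) ?_ (neg_le_neg hu0.1))
    · have : μ * (σ * M / μ) = σ * M := by field_simp [hμ.ne]
      nlinarith [(hdelay s hs).1]
    · rw [div_lt_iff_of_neg hμ]; nlinarith
  · refine lt_of_hasDerivAt_le_mul_sub (K := -(σ * N) / μ) hμ ht hu.continuousOn
      (fun s hs => hode s hs.1) (fun s hs => ?_) ?_ hu0.2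
    · have : μ * (-(σ * N) / μ) = -(σ * N) := by field_simp [hμ.ne]
      nlinarith [(hdelay s hs).2]
    · rw [div_lt_iff_of_neg hμ]; nlinarith

end SDDE

theorem sdde_bounds_positive_feedback_general
    (a c μ σ M N τ : ℝ) (φ u : ℝ → ℝ)
    (hc : 0 < c) (hσ0 : 0 < σ) (hσμ : σ < -μ)
    (hM : M ∈ Set.Ico (Mzero a c) (0:ℝ)) (hN : 0 < N) (hτ : τ = a + c * N)
    (hφ : ∀ t ∈ Set.Icc (-τ) (0:ℝ), φ t ∈ Set.Icc M N)
    (hu : IsSDDESolution a c μ σ φ u) :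
    ∀ t > (0:ℝ), u t ∈ Set.Ioo M N := by
  obtain ⟨hcont, hhist, -, hode⟩ := hu
  subst hτ
  have hcM : -a ≤ c * M := by
    have := (div_le_iff₀ hc).1 hM.1
    linarith
  have hμσ : μ + σ < 0 := by linarith
  have hinv := mem_Icc_of_history hc hcM hM.2 hN hσ0 hμσ hcont hode fun s hs =>
    hhist s hs.2 ▸ hφ s hs
  exact fun t ht => mem_Ioo_of_forall_mem_Icc hc hcM hM.2 hN hσ0 hμσ hcont hode hinv ht

/-- Boundedness of solutions (positive feedback case `0 < σ < -μ`). -/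
theorem sdde_bounds_positive_feedback
    (a c μ σ M N τ : ℝ) (φ u : ℝ → ℝ)
    (ha : 0 < a) (hc : 0 < c) (hμ : μ < 0) (hσ0 : 0 < σ) (hσμ : σ < -μ)
    (hM : M ∈ Set.Ico (Mzero a c) (0:ℝ)) (hN : 0 < N) (hτ : τ = a + c * N)
    (hφcont : Continuous φ)
    (hφ : ∀ t ∈ Set.Icc (-τ) (0:ℝ), φ t ∈ Set.Icc M N)
    (hu : IsSDDESolution a c μ σ φ u) :
    ∀ t > (0:ℝ), u t ∈ Set.Ioo M N :=
  sdde_bounds_positive_feedback_general a c μ σ M N τ φ u hc hσ0 hσμ hM hN hτ hφ hu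
end

section
/- (Global asymptotic stability in the cone, positive feedback case.) Let a > 0, c > 0, σ > 0 and μ < −σ (so |σ| < −μ). Let N > 0, τ = a + c·N, and suppose φ is continuous with φ(t) ∈ [M₀, N] for all t ∈ [−τ, 0]. Then every solution u of the SDDE satisfies u(t) ∈ (M₀, N) for all t > 0, and u(t) → 0 as t → ∞. -/
open Real Set Filter

/-!
Both ends of `(M₀, N)` are barriers. At the level `M₀` the delay `a + c u(t)` vanishes, so
`u' = (μ + σ) M₀ > 0` there. At the level `N` the delayed argument is `t - τ`, where `u ≤ N`
by the history or because `t` is the first contact time, so `u' ≤ (μ + σ) N < 0`.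
Once `u` stays in `(M₀, N)`, the delayed argument is at least `t - τ`, so it tends to infinity.
Hence `|u| ≤ r` eventually gives `u' = μ u + w` with `|w| ≤ |σ| r` eventually, which forces
`|u| ≤ k r` eventually for every `k > |σ| / (-μ)`; iterating with `k < 1` gives `u → 0`.
-/

open Topology

theorem HasDerivWithinAt.eventually_lt_right_of_neg {f : ℝ → ℝ} {d x : ℝ}
    (hf : HasDerivWithinAt f d (Ici x) x) (hd : d < 0) : ∀ᶠ z in 𝓝[>] x, f z < f x := by
  filter_upwards [hf.Ioi_of_Ici.limsup_slope_le' (lt_irrefl x) hd, self_mem_nhdsWithin]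
    with z hslope hxz
  rw [slope_def_field, div_lt_iff₀ (sub_pos.2 hxz), zero_mul] at hslope
  linarith

theorem HasDerivAt.eventually_gt_left_of_neg {f : ℝ → ℝ} {d x : ℝ}
    (hf : HasDerivAt f d x) (hd : d < 0) : ∀ᶠ z in 𝓝[<] x, f x < f z := by
  filter_upwards [hf.hasDerivWithinAt.limsup_slope_le' (lt_irrefl x) hd, self_mem_nhdsWithin]
    with z hslope hzx
  rw [slope_def_field, div_lt_iff_of_neg (sub_neg.2 hzx), zero_mul] at hslope
  linarith

theorem lt_of_deriv_neg_at_first_contact {f : ℝ → ℝ} {t₀ N : ℝ} (hf : Continuous f)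
    (h₀ : f t₀ ≤ N) (hd₀ : f t₀ = N → ∃ d < 0, HasDerivWithinAt f d (Ici t₀) t₀)
    (hd : ∀ T > t₀, f T = N → (∀ s ∈ Ioo t₀ T, f s < N) → ∃ d < 0, HasDerivAt f d T) :
    ∀ t > t₀, f t < N := by
  have hinit : ∀ᶠ t in 𝓝[>] t₀, f t < N := by
    rcases h₀.lt_or_eq with h | h
    · exact nhdsWithin_le_nhds (hf.continuousAt.eventually_lt continuousAt_const h)
    · obtain ⟨d, hd_neg, hderiv⟩ := hd₀ h
      simpa only [h] using hderiv.eventually_lt_right_of_neg hd_neg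
  obtain ⟨δ, hδ, hδN⟩ := mem_nhdsGT_iff_exists_Ioo_subset.1 hinit
  by_contra! hcontra
  obtain ⟨t₁, ht₁, hNt₁⟩ := hcontra
  set K := {t | t₀ < t ∧ N ≤ f t}
  have hK : K.Nonempty := ⟨t₁, ht₁, hNt₁⟩
  have hKbdd : BddBelow K := ⟨t₀, fun t ht => ht.1.le⟩
  set T := sInf K
  have hT : t₀ < T := hδ.trans_le <|
    le_csInf hK fun t ht => not_lt.1 fun htδ => (hδN ⟨ht.1, htδ⟩).not_ge ht.2
  have hbefore : ∀ s ∈ Ioo t₀ T, f s < N := fun s hs =>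
    not_le.1 fun hNs => notMem_of_lt_csInf hs.2 hKbdd ⟨hs.1, hNs⟩
  have hNT : N ≤ f T :=
    (isClosed_le continuous_const hf).closure_subset_iff.2 (fun t ht => ht.2)
      (csInf_mem_closure hK hKbdd)
  have hTN : f T ≤ N :=
    le_of_tendsto (hf.continuousAt.tendsto.mono_left nhdsWithin_le_nhds)
      (eventually_of_mem (Ioo_mem_nhdsLT hT) fun s hs => (hbefore s hs).le)
  obtain ⟨d, hd_neg, hderiv⟩ := hd T hT (le_antisymm hTN hNT) hbefore
  obtain ⟨s, hTs, hs⟩ :=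
    ((hderiv.eventually_gt_left_of_neg hd_neg).and (Ioo_mem_nhdsLT hT)).exists
  linarith [hbefore s hs]

theorem eventually_le_of_deriv_le_mul_sub {f f' : ℝ → ℝ} {μ C ρ : ℝ} (hμ : μ < 0)
    (hf : ∀ᶠ t in atTop, HasDerivAt f (f' t) t) (hf' : ∀ᶠ t in atTop, f' t ≤ μ * (f t - C))
    (hC : C < ρ) : ∀ᶠ t in atTop, f t ≤ ρ := by
  obtain ⟨T, hT⟩ := eventually_atTop.1 (hf.and hf')
  obtain ⟨ρ', hCρ', hρ'ρ⟩ := exists_between hC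
  -- `B' = μ (B - ρ')` with `ρ' > C`, so at a contact point `f' ≤ μ (B - C) < B'` strictly.
  set B : ℝ → ℝ := fun t => ρ' + (f T - ρ') * exp (μ * (t - T))
  have hB : ∀ t, HasDerivAt B (μ * (B t - ρ')) t := by
    intro t
    have h := (((hasDerivAt_id' t).sub_const T).const_mul μ).exp.const_mul (f T - ρ')
    exact (h.const_add ρ').congr_deriv (by simp only [B]; ring)
  have hfB : ∀ t ≥ T, f t ≤ B t := fun t ht =>
    image_le_of_deriv_right_lt_deriv_boundary
      (fun x hx => (hT x hx.1).1.continuousAt.continuousWithinAt)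
      (fun x hx => (hT x hx.1).1.hasDerivWithinAt) (by simp [B]) hB
      (fun x hx hfx => by nlinarith [(hT x hx.1).2, mul_neg_of_neg_of_pos hμ (sub_pos.2 hCρ')])
      ⟨ht, le_rfl⟩
  have hB_lim : Tendsto B atTop (𝓝 ρ') := by
    have hlin : Tendsto (fun t => μ * (t + -T)) atTop atBot :=
      (tendsto_atTop_add_const_right _ (-T) tendsto_id).const_mul_atTop_of_neg hμ
    simpa [B, sub_eq_add_neg] using
      ((tendsto_exp_atBot.comp hlin).const_mul (f T - ρ')).const_add ρ'
  filter_upwards [eventually_ge_atTop T, hB_lim.eventually (gt_mem_nhds hρ'ρ)] with t hTt hBt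
  exact (hfB t hTt).trans hBt.le

theorem eventually_abs_le_of_hasDerivAt {f w : ℝ → ℝ} {μ r ρ : ℝ} (hμ : μ < 0)
    (hf : ∀ᶠ t in atTop, HasDerivAt f (μ * f t + w t) t) (hw : ∀ᶠ t in atTop, |w t| ≤ r)
    (hρ : r < -μ * ρ) : ∀ᶠ t in atTop, |f t| ≤ ρ := by
  have hC : r / -μ < ρ := (div_lt_iff₀ (neg_pos.2 hμ)).2 (by linarith)
  have hμC : μ * (r / -μ) = -r := by field_simp [hμ.ne]
  have hupper := eventually_le_of_deriv_le_mul_sub hμ hf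
    (hw.mono fun t ht => by linarith [(abs_le.1 ht).2]) hC
  have hlower := eventually_le_of_deriv_le_mul_sub (f := -f) hμ (hf.mono fun t ht => ht.neg)
    (hw.mono fun t ht => by simp only [Pi.neg_apply]; linarith [(abs_le.1 ht).1]) hC
  filter_upwards [hupper, hlower] with t h1 h2
  exact abs_le.2 ⟨by simp only [Pi.neg_apply] at h2; linarith, h1⟩

theorem tendsto_zero_of_abs_le_contraction {α : Type*} {l : Filter α} {u : α → ℝ} {k R : ℝ}
    (hk₀ : 0 < k) (hk : k < 1) (hR₀ : 0 < R) (hR : ∀ᶠ t in l, |u t| ≤ R)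
    (hstep : ∀ r > 0, (∀ᶠ t in l, |u t| ≤ r) → ∀ᶠ t in l, |u t| ≤ k * r) :
    Tendsto u l (𝓝 0) := by
  have hpow : ∀ n : ℕ, ∀ᶠ t in l, |u t| ≤ k ^ n * R := by
    intro n
    induction n with
    | zero => simpa using hR
    | succ n ih =>
      simpa only [pow_succ, mul_comm, mul_left_comm] using hstep _ (by positivity) ih
  refine Metric.tendsto_nhds.2 fun ε hε => ?_
  obtain ⟨n, hn⟩ := exists_pow_lt_of_lt_one (div_pos hε hR₀) hk
  filter_upwards [hpow n] with t ht
  rw [Real.dist_0_eq_abs]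
  exact ht.trans_lt ((lt_div_iff₀ hR₀).1 hn)

theorem tendsto_sub_sub_mul_atTop {u : ℝ → ℝ} {a c N : ℝ} (hc : 0 ≤ c)
    (hu : ∀ᶠ t in atTop, u t ≤ N) : Tendsto (fun t => t - a - c * u t) atTop atTop :=
  tendsto_atTop_mono' atTop
    (hu.mono fun t ht => by simp only [id]; linarith [mul_le_mul_of_nonneg_left ht hc])
    (tendsto_atTop_add_const_right _ (-(a + c * N)) tendsto_id)

def sddeRhs (a c μ σ : ℝ) (u : ℝ → ℝ) (t : ℝ) : ℝ := μ * u t + σ * u (t - a - c * u t)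

theorem sddeRhs_of_eq_Mzero {a c μ σ t : ℝ} {u : ℝ → ℝ} (hc : c ≠ 0) (ht : u t = Mzero a c) :
    sddeRhs a c μ σ u t = (μ + σ) * Mzero a c := by
  have hdelay : t - a - c * u t = t := by rw [ht, Mzero]; field_simp; ring
  rw [sddeRhs, hdelay, ht]; ring

namespace IsSDDESolution

variable {a c μ σ : ℝ} {φ u : ℝ → ℝ}

theorem hasDerivAt (hu : IsSDDESolution a c μ σ φ u) {t : ℝ} (ht : 0 < t) :
    HasDerivAt u (sddeRhs a c μ σ u t) t :=
  hu.2.2.2 t ht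

theorem continuous_sddeRhs (hu : IsSDDESolution a c μ σ φ u) :
    Continuous (sddeRhs a c μ σ u) := by
  have := hu.1
  unfold sddeRhs
  fun_prop

theorem hasDerivWithinAt_Ici_zero (hu : IsSDDESolution a c μ σ φ u) :
    HasDerivWithinAt u (sddeRhs a c μ σ u 0) (Ici 0) 0 := by
  have hderiv : deriv u =ᶠ[𝓝[>] 0] sddeRhs a c μ σ u :=
    eventually_mem_nhdsWithin.mono fun t ht => (hu.hasDerivAt ht).deriv
  exact hasDerivWithinAt_Ici_of_tendsto_deriv
    (fun t ht => (hu.hasDerivAt ht).differentiableAt.differentiableWithinAt)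
    hu.1.continuousWithinAt self_mem_nhdsWithin
    (((hu.continuous_sddeRhs.tendsto 0).mono_left nhdsWithin_le_nhds).congr' hderiv.symm)

theorem Mzero_lt (hu : IsSDDESolution a c μ σ φ u) (ha : 0 < a) (hc : 0 < c)
    (hμσ : μ + σ < 0) (h₀ : Mzero a c ≤ u 0) : ∀ t > 0, Mzero a c < u t := by
  have hM : Mzero a c < 0 := div_neg_of_neg_of_pos (neg_neg_of_pos ha) hc
  have hrhs : ∀ t, -u t = -Mzero a c → -sddeRhs a c μ σ u t < 0 := fun t ht => by
    rw [sddeRhs_of_eq_Mzero hc.ne' (neg_inj.1 ht)]; nlinarith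
  have h := lt_of_deriv_neg_at_first_contact (f := -u) (N := -Mzero a c) hu.1.neg
    (neg_le_neg h₀) (fun h => ⟨_, hrhs 0 h, hu.hasDerivWithinAt_Ici_zero.neg⟩)
    (fun T hT h _ => ⟨_, hrhs T h, (hu.hasDerivAt hT).neg⟩)
  exact fun t ht => neg_lt_neg_iff.1 (h t ht)

theorem lt_of_le_on_history (hu : IsSDDESolution a c μ σ φ u) {N : ℝ} (hσ : 0 < σ)
    (hμσ : μ + σ < 0) (hN : 0 < N) (hτ : 0 < a + c * N)
    (hhist : ∀ t ∈ Icc (-(a + c * N)) 0, u t ≤ N) : ∀ t > 0, u t < N := by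
  have hrhs : ∀ T ≥ 0, u T = N → (∀ s ∈ Ioo 0 T, u s < N) → sddeRhs a c μ σ u T < 0 := by
    intro T hT huT hbefore
    have hdelay : u (T - (a + c * N)) ≤ N := by
      rcases le_or_gt (T - (a + c * N)) 0 with h | h
      · exact hhist _ ⟨by linarith, h⟩
      · exact (hbefore _ ⟨h, by linarith⟩).le
    rw [sddeRhs, huT, show T - a - c * N = T - (a + c * N) by ring]
    nlinarith
  exact lt_of_deriv_neg_at_first_contact hu.1 (hhist 0 ⟨by linarith, le_rfl⟩)
    (fun h => ⟨_, hrhs 0 le_rfl h (by simp), hu.hasDerivWithinAt_Ici_zero⟩)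
    (fun T hT h hbefore => ⟨_, hrhs T hT.le h hbefore, hu.hasDerivAt hT⟩)

theorem tendsto_atTop_zero (hu : IsSDDESolution a c μ σ φ u) (hc : 0 ≤ c) (hσμ : |σ| < -μ)
    {M N : ℝ} (hN : 0 < N) (hbounds : ∀ᶠ t in atTop, u t ∈ Icc M N) :
    Tendsto u atTop (𝓝 0) := by
  have hμ : 0 < -μ := (abs_nonneg σ).trans_lt hσμ
  obtain ⟨k, hσk, hk⟩ := exists_between ((div_lt_one hμ).2 hσμ)
  have hσk' : |σ| < -μ * k := by rw [div_lt_iff₀ hμ] at hσk; linarith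
  have hdelay := tendsto_sub_sub_mul_atTop (a := a) hc (hbounds.mono fun t ht => ht.2)
  refine tendsto_zero_of_abs_le_contraction (R := max N (-M))
    ((div_nonneg (abs_nonneg σ) hμ.le).trans_lt hσk) hk (lt_max_of_lt_left hN)
    (hbounds.mono fun t ht => abs_le.2 ⟨?_, ?_⟩) fun r hr hur => ?_
  · linarith [ht.1, le_max_right N (-M)]
  · linarith [ht.2, le_max_left N (-M)]
  refine eventually_abs_le_of_hasDerivAt (w := fun t => σ * u (t - a - c * u t))
    (r := |σ| * r) (by linarith) ((eventually_gt_atTop 0).mono fun t ht => hu.hasDerivAt ht)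
    ((hdelay.eventually hur).mono fun t ht => ?_) (by nlinarith)
  rw [abs_mul]
  exact mul_le_mul_of_nonneg_left ht (abs_nonneg σ)

end IsSDDESolution

theorem sdde_gas_cone_positive_general
    (a c μ σ N τ : ℝ) (φ u : ℝ → ℝ)
    (ha : 0 < a) (hc : 0 < c) (hσ : 0 < σ) (hμ : μ < -σ)
    (hN : 0 < N) (hτ : τ = a + c * N)
    (hφ : ∀ t ∈ Set.Icc (-τ) (0:ℝ), φ t ∈ Set.Icc (Mzero a c) N)
    (hu : IsSDDESolution a c μ σ φ u) :
    (∀ t > (0:ℝ), u t ∈ Set.Ioo (Mzero a c) N) ∧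
      Filter.Tendsto u Filter.atTop (nhds 0) := by
  subst hτ
  have hμσ : μ + σ < 0 := by linarith
  have hhist : ∀ t ∈ Icc (-(a + c * N)) 0, u t ∈ Icc (Mzero a c) N := fun t ht =>
    hu.2.1 t ht.2 ▸ hφ t ht
  have hbounds : ∀ t > 0, u t ∈ Ioo (Mzero a c) N := fun t ht =>
    ⟨hu.Mzero_lt ha hc hμσ (hhist 0 ⟨by nlinarith, le_rfl⟩).1 t ht,
      hu.lt_of_le_on_history hσ hμσ hN (by positivity) (fun t ht => (hhist t ht).2) t ht⟩
  have hev : ∀ᶠ t in atTop, u t ∈ Icc (Mzero a c) N :=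
    (eventually_gt_atTop 0).mono fun t ht => Ioo_subset_Icc_self (hbounds t ht)
  exact ⟨hbounds, hu.tendsto_atTop_zero hc.le (by rw [abs_of_pos hσ]; linarith) hN hev⟩

/-- Global asymptotic stability in the cone, positive feedback case. -/
theorem sdde_gas_cone_positive
    (a c μ σ N τ : ℝ) (φ u : ℝ → ℝ)
    (ha : 0 < a) (hc : 0 < c) (hσ : 0 < σ) (hμ : μ < -σ)
    (hN : 0 < N) (hτ : τ = a + c * N)
    (hφcont : Continuous φ)
    (hφ : ∀ t ∈ Set.Icc (-τ) (0:ℝ), φ t ∈ Set.Icc (Mzero a c) N)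
    (hu : IsSDDESolution a c μ σ φ u) :
    (∀ t > (0:ℝ), u t ∈ Set.Ioo (Mzero a c) N) ∧
      Filter.Tendsto u Filter.atTop (nhds 0) :=
  sdde_gas_cone_positive_general a c μ σ N τ φ u ha hc hσ hμ hN hτ hφ hu
end

section
/- (Solution dichotomy.) Let a > 0, c > 0, μ < 0 and σ < 0. Set N = max{N₀, φ(0)} and τ = a + c·N, and suppose φ is continuous with φ(t) ≥ M₀ for all t ∈ [−τ, 0]. Then every solution u of the SDDE behaves in exactly one of the following two ways: (A) there exists T̄ ≥ 0 such that u is monotone on [T̄, ∞) and u(t) → 0 as t → ∞; or (B) for every T > 0 there exist T₁ > T and T₂ > T such that u attains a local maximum at T₁ with u(T₁) > 0 and a local minimum at T₂ with u(T₂) < 0, and furthermore there exists t ∈ [T, T + τ] such that u(t)·u'(t) < 0. -/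
open Real Set Filter

/-!
Where `u = M₀` the delay `d(t) = t - a - c u(t)` vanishes and `u' = (μ + σ) M₀ > 0`; where
`u = N + t / c` the delayed argument is exactly `-τ` and `u' ≤ μ N + σ M₀ ≤ 0`. Comparison with
these barriers (and with `N + ε`) gives `M₀ ≤ u ≤ N` on `[0, ∞)`, i.e. `d(t) ∈ [t - τ, t]`, after
which `u` solves the linear equation `v' = μ v + σ v(d(t))` with delay bounded by `τ`.

If `v` is eventually of one sign, the right-hand side has the opposite sign, so `v` is eventually
monotone, and a nonzero limit `L` would force the drift `|v'| ≥ |μ + σ| |L|`. If `v` changes sign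
infinitely often, its extrema between sign changes give the local maxima and minima. Finally, if
`v v' ≥ 0` on `[T, T + τ]`, then `v²` increases there, so `v(T + τ)` and `v(d(T + τ))` have the
same sign and `(v v')(T + τ) = μ v² + σ v v(d) < 0`, unless `v(T + τ) = 0`; then `v` vanishes on a
window of length `τ`, and hence forever, since on a short interval beyond it `max |v|` is at most
half of itself.
-/

open Topology

lemma le_of_deriv_right_lt_deriv_boundary_Ici {f f' B B' : ℝ → ℝ} {t₀ : ℝ} (hf : Continuous f)
    (hf' : ∀ x ≥ t₀, HasDerivWithinAt f (f' x) (Ici x) x) (hB : ∀ x, HasDerivAt B (B' x) x)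
    (h₀ : f t₀ ≤ B t₀) (bound : ∀ x ≥ t₀, f x = B x → f' x < B' x) : ∀ x ≥ t₀, f x ≤ B x :=
  fun _ hx => image_le_of_deriv_right_lt_deriv_boundary hf.continuousOn (fun y hy => hf' y hy.1)
    h₀ hB (fun y hy => bound y hy.1) ⟨hx, le_rfl⟩

lemma monotoneOn_sq_of_mul_deriv_nonneg {v : ℝ → ℝ} {a b : ℝ} (hvc : ContinuousOn v (Icc a b))
    (hvd : ∀ x ∈ Ioo a b, DifferentiableAt ℝ v x) (h : ∀ x ∈ Ioo a b, 0 ≤ v x * deriv v x) :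
    MonotoneOn (fun x => v x ^ 2) (Icc a b) := by
  refine monotoneOn_of_hasDerivWithinAt_nonneg (convex_Icc a b) (hvc.pow 2)
    (fun x hx => ?_) (fun x hx => ?_) (f' := fun x => 2 * (v x * deriv v x))
  all_goals rw [interior_Icc] at hx
  · exact ((hvd x hx).hasDerivAt.fun_pow 2).hasDerivWithinAt.congr_deriv (by push_cast; ring)
  · have := h x hx
    positivity

lemma mul_nonneg_of_monotoneOn_sq {v : ℝ → ℝ} {a b : ℝ} (hab : a ≤ b)
    (hvc : ContinuousOn v (Icc a b)) (hmono : MonotoneOn (fun x => v x ^ 2) (Icc a b)) :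
    0 ≤ v a * v b := by
  by_contra! hneg
  have hzero : (0 : ℝ) ∈ uIcc (v a) (v b) := by
    rcases lt_or_ge (v a) 0 with ha | ha
    · exact mem_uIcc.2 (Or.inl ⟨ha.le, by nlinarith⟩)
    · exact mem_uIcc.2 (Or.inr ⟨by nlinarith, ha⟩)
  rw [← uIcc_of_le hab] at hvc
  obtain ⟨z, hz, hvz⟩ := intermediate_value_uIcc hvc hzero
  rw [uIcc_of_le hab] at hz
  have : v a ^ 2 ≤ v z ^ 2 := hmono ⟨le_rfl, hab⟩ hz hz.1
  rw [hvz] at this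
  have : v a = 0 := by nlinarith
  simp [this] at hneg

lemma exists_isLocalMax_pos {v : ℝ → ℝ} (hvc : Continuous v) (hpos : ∃ᶠ t in atTop, 0 < v t)
    (hneg : ∃ᶠ t in atTop, v t < 0) (T : ℝ) : ∃ T₁ > T, IsLocalMax v T₁ ∧ 0 < v T₁ := by
  obtain ⟨q, hqT, hq⟩ := frequently_atTop'.1 hneg T
  obtain ⟨r, hrq, hr⟩ := frequently_atTop'.1 hpos q
  obtain ⟨w, hwr, hw⟩ := frequently_atTop'.1 hneg r
  obtain ⟨m, hm, hmax⟩ := isCompact_Icc.exists_isMaxOn (nonempty_Icc.2 (hrq.trans hwr).le)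
    hvc.continuousOn
  have hvm : 0 < v m := hr.trans_le (hmax ⟨hrq.le, hwr.le⟩)
  have hqm : q < m := hm.1.lt_of_ne fun h => by rw [← h] at hvm; linarith
  have hmw : m < w := hm.2.lt_of_ne fun h => by rw [h] at hvm; linarith
  exact ⟨m, hqT.trans hqm, hmax.isLocalMax (Icc_mem_nhds hqm hmw), hvm⟩

lemma exists_isLocalMin_neg {v : ℝ → ℝ} (hvc : Continuous v) (hpos : ∃ᶠ t in atTop, 0 < v t)
    (hneg : ∃ᶠ t in atTop, v t < 0) (T : ℝ) : ∃ T₂ > T, IsLocalMin v T₂ ∧ v T₂ < 0 := by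
  obtain ⟨m, hmT, hmax, hvm⟩ := exists_isLocalMax_pos hvc.neg
    (hneg.mono fun t ht => neg_pos.2 ht) (hpos.mono fun t ht => neg_neg_iff_pos.2 ht) T
  exact ⟨m, hmT, by simpa using hmax.neg, neg_pos.1 hvm⟩

def HasLinearDelayDeriv (μ σ : ℝ) (d : ℝ → ℝ) (t₀ : ℝ) (v : ℝ → ℝ) : Prop :=
  ∀ t > t₀, HasDerivAt v (μ * v t + σ * v (d t)) t

namespace HasLinearDelayDeriv

variable {μ σ τ t₀ : ℝ} {d v : ℝ → ℝ}

lemma neg (hv : HasLinearDelayDeriv μ σ d t₀ v) : HasLinearDelayDeriv μ σ d t₀ (-v) := by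
  intro t ht
  rw [show μ * (-v) t + σ * (-v) (d t) = -(μ * v t + σ * v (d t)) by simp only [Pi.neg_apply]; ring]
  exact (hv t ht).neg

lemma hasDerivWithinAt_Ici (hv : HasLinearDelayDeriv μ σ d t₀ v) (hvc : Continuous v)
    (hdc : Continuous d) {t : ℝ} (ht : t₀ ≤ t) :
    HasDerivWithinAt v (μ * v t + σ * v (d t)) (Ici t) t := by
  rcases ht.lt_or_eq with ht | rfl
  · exact (hv t ht).hasDerivWithinAt
  have hg : Tendsto (fun s => μ * v s + σ * v (d s)) (𝓝[>] t₀) (𝓝 (μ * v t₀ + σ * v (d t₀))) :=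
    (by fun_prop : Continuous fun s => μ * v s + σ * v (d s)).continuousAt.tendsto.mono_left
      nhdsWithin_le_nhds
  exact hasDerivWithinAt_Ici_of_tendsto_deriv
    (fun x hx => (hv x hx).differentiableAt.differentiableWithinAt) hvc.continuousWithinAt
    self_mem_nhdsWithin
    (hg.congr' (eventually_nhdsWithin_of_forall fun x hx => (hv x hx).deriv.symm))

section Nonneg

variable (hv : HasLinearDelayDeriv μ σ d t₀ v) (hvc : Continuous v)
  (hd : ∀ t > t₀, t - τ ≤ d t) (hτ : 0 ≤ τ)
include hv hvc hd hτ

lemma antitoneOn_of_nonneg (hμ : μ ≤ 0) (hσ : σ ≤ 0) {T : ℝ} (hT : t₀ ≤ T)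
    (hpos : ∀ t ≥ T, 0 ≤ v t) : AntitoneOn v (Ici (T + τ)) := by
  refine antitoneOn_of_hasDerivWithinAt_nonpos (convex_Ici _) hvc.continuousOn
    (fun x hx => (hv x ?_).hasDerivWithinAt) fun x hx => ?_
  all_goals rw [interior_Ici, mem_Ioi] at hx
  · linarith
  · have := hd x (by linarith)
    nlinarith [hpos x (by linarith), hpos (d x) (by linarith)]

lemma not_forall_ge_le (hμ : μ < 0) (hσ : σ ≤ 0) {T ε : ℝ} (hT : t₀ ≤ T) (hε : 0 < ε) :
    ¬∀ t ≥ T, ε ≤ v t := by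
  intro hlow
  set x₀ := T + τ
  set C := -((μ + σ) * ε)
  have hC : 0 < C := neg_pos.2 (mul_neg_of_neg_of_pos (by linarith) hε)
  have hdrift : ∀ y ≥ x₀, v y - v x₀ ≤ -C * (y - x₀) := by
    refine fun y hy => (convex_Ici x₀).image_sub_le_mul_sub_of_deriv_le hvc.continuousOn
      (fun x hx => ?_) (fun x hx => ?_) x₀ self_mem_Ici y hy hy
    all_goals rw [interior_Ici, mem_Ioi] at hx
    · exact (hv x (by linarith)).differentiableAt.differentiableWithinAt
    · rw [(hv x (by linarith)).deriv]
      have := hd x (by linarith)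
      nlinarith [hlow x (by linarith), hlow (d x) (by linarith)]
  have hy : x₀ ≤ x₀ + v x₀ / C :=
    le_add_of_nonneg_right (div_nonneg (hε.le.trans (hlow x₀ (by linarith))) hC.le)
  have := hdrift _ hy
  rw [add_sub_cancel_left, neg_mul, mul_div_cancel₀ _ hC.ne'] at this
  linarith [hlow _ (by linarith : x₀ + v x₀ / C ≥ T)]

lemma eventually_antitoneOn_and_tendsto_zero (hμ : μ < 0) (hσ : σ ≤ 0)
    (hpos : ∀ᶠ t in atTop, 0 ≤ v t) :
    (∀ᶠ T in atTop, AntitoneOn v (Ici T)) ∧ Tendsto v atTop (𝓝 0) := by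
  obtain ⟨T, hT⟩ := eventually_atTop.1 (hpos.and (eventually_ge_atTop t₀))
  have hanti := antitoneOn_of_nonneg hv hvc hd hτ hμ.le hσ (hT T le_rfl).2 fun t ht => (hT t ht).1
  refine ⟨eventually_atTop.2 ⟨T + τ, fun S hS => hanti.mono (Ici_subset_Ici.2 hS)⟩,
    tendsto_order.2 ⟨fun a ha => hpos.mono fun t ht => ha.trans_le ht, fun ε hε => ?_⟩⟩
  by_contra hnot
  refine not_forall_ge_le hv hvc hd hτ hμ hσ (T := T + τ) (by linarith [(hT T le_rfl).2]) hε
    fun t ht => ?_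
  by_contra! hlt
  exact hnot (eventually_atTop.2 ⟨t, fun s hs => (hanti ht (ht.trans hs) hs).trans_lt hlt⟩)

lemma exists_monotoneOn_tendsto_zero_iff (hμ : μ < 0) (hσ : σ ≤ 0) :
    (∃ T ≥ (0:ℝ), (MonotoneOn v (Ici T) ∨ AntitoneOn v (Ici T)) ∧ Tendsto v atTop (𝓝 0)) ↔
      ¬((∃ᶠ t in atTop, 0 < v t) ∧ ∃ᶠ t in atTop, v t < 0) := by
  constructor
  · rintro ⟨T, -, hmono | hanti, hlim⟩ ⟨hpos, hneg⟩
    · refine hpos (eventually_atTop.2 ⟨T, fun t ht => not_lt.2 ?_⟩)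
      exact ge_of_tendsto hlim (eventually_atTop.2 ⟨t, fun s hs => hmono ht (ht.trans hs) hs⟩)
    · refine hneg (eventually_atTop.2 ⟨T, fun t ht => not_lt.2 ?_⟩)
      exact le_of_tendsto hlim (eventually_atTop.2 ⟨t, fun s hs => hanti ht (ht.trans hs) hs⟩)
  · rw [not_and_or, not_frequently, not_frequently]
    rintro (hnonpos | hnonneg)
    · obtain ⟨hanti, hlim⟩ := eventually_antitoneOn_and_tendsto_zero hv.neg hvc.neg hd hτ hμ hσ
        (hnonpos.mono fun t ht => by simpa using not_lt.1 ht)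
      obtain ⟨T, hanti, hT⟩ := (hanti.and (eventually_ge_atTop 0)).exists
      exact ⟨T, hT, Or.inl (by simpa using hanti.neg), by simpa using hlim.neg⟩
    · obtain ⟨hanti, hlim⟩ := eventually_antitoneOn_and_tendsto_zero hv hvc hd hτ hμ hσ
        (hnonneg.mono fun t ht => not_lt.1 ht)
      obtain ⟨T, hanti, hT⟩ := (hanti.and (eventually_ge_atTop 0)).exists
      exact ⟨T, hT, Or.inr hanti, hlim⟩

end Nonneg

section BoundedDelay

variable (hv : HasLinearDelayDeriv μ σ d t₀ v) (hvc : Continuous v)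
  (hd : ∀ t > t₀, d t ∈ Icc (t - τ) t)
include hv hvc hd

lemma eqOn_zero_extend {T X : ℝ} (hT : t₀ < T) (hX : T + τ ≤ X)
    (hz : ∀ t ∈ Icc T X, v t = 0) :
    ∀ t ∈ Icc T (X + 1 / (2 * (|μ| + |σ| + 1))), v t = 0 := by
  have hτ : 0 ≤ τ := by linarith [(hd T hT).1, (hd T hT).2]
  set K := |μ| + |σ| + 1
  set h := 1 / (2 * K)
  have hK : 0 < K := by positivity
  have hKh : K * h = 1 / 2 := by simp only [h]; field_simp
  obtain ⟨tm, htm, hmax⟩ := isCompact_Icc.exists_isMaxOn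
    (nonempty_Icc.2 (le_add_of_nonneg_right (by positivity) : X ≤ X + h))
    (continuous_abs.comp hvc).continuousOn
  set m := |v tm|
  have hm : ∀ x ∈ Icc T (X + h), |v x| ≤ m := by
    intro x hx
    rcases le_or_gt x X with hxX | hxX
    · rw [hz x ⟨hx.1, hxX⟩, abs_zero]
      exact abs_nonneg _
    · exact hmax ⟨hxX.le, hx.2⟩
  have hlip : ∀ x ∈ Icc X (X + h), ‖v x - v X‖ ≤ K * m * (x - X) := by
    refine norm_image_sub_le_of_norm_deriv_right_le_segment hvc.continuousOn
      (fun x hx => (hv x (by linarith [hx.1])).hasDerivWithinAt) fun x hx => ?_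
    have hdx := hd x (by linarith [hx.1])
    calc ‖μ * v x + σ * v (d x)‖ ≤ |μ| * |v x| + |σ| * |v (d x)| := by
          rw [Real.norm_eq_abs, ← abs_mul, ← abs_mul]
          exact abs_add_le _ _
      _ ≤ |μ| * m + |σ| * m := by
          gcongr
          · exact hm x ⟨by linarith [hx.1], hx.2.le⟩
          · exact hm _ ⟨by linarith [hdx.1, hx.1], by linarith [hdx.2, hx.2]⟩
      _ ≤ K * m := by nlinarith [abs_nonneg (v tm)]
  -- the maximum `m` of `|v|` on `[X, X + h]` satisfies `m ≤ K m h = m / 2`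
  have hm0 : m ≤ 0 := by
    have hvtm := hlip tm htm
    rw [hz X ⟨by linarith, le_rfl⟩, sub_zero, Real.norm_eq_abs] at hvtm
    have : K * m * (tm - X) ≤ K * m * h := by
      gcongr
      linarith [htm.2]
    nlinarith
  intro t ht
  rcases le_or_gt t X with htX | htX
  · exact hz t ⟨ht.1, htX⟩
  · exact abs_nonpos_iff.1 ((hm t ht).trans hm0)

lemma eq_zero_of_eqOn_Icc {T : ℝ} (hT : t₀ < T) (hz : ∀ t ∈ Icc T (T + τ), v t = 0) :
    ∀ t ≥ T, v t = 0 := by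
  set h := 1 / (2 * (|μ| + |σ| + 1))
  have hh : 0 < h := by positivity
  have hstep : ∀ n : ℕ, ∀ t ∈ Icc T (T + τ + n * h), v t = 0 := by
    intro n
    induction n with
    | zero => simpa using hz
    | succ n ih =>
      have := eqOn_zero_extend hv hvc hd hT (by have := n.cast_nonneg (α := ℝ); nlinarith) ih
      rwa [Nat.cast_succ, add_one_mul, ← add_assoc]
  intro t ht
  obtain ⟨n, hn⟩ := exists_nat_ge ((t - T - τ) / h)
  exact hstep n t ⟨ht, by rw [div_le_iff₀ hh] at hn; linarith⟩

lemma exists_mul_deriv_neg (hμ : μ < 0) (hσ : σ ≤ 0) (hne : ∃ᶠ t in atTop, v t ≠ 0) {T : ℝ}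
    (hT : t₀ < T) : ∃ t ∈ Icc T (T + τ), v t * deriv v t < 0 := by
  by_contra! hnonneg
  have hτ : 0 ≤ τ := by linarith [(hd T hT).1, (hd T hT).2]
  set E := T + τ
  have hTE : T ≤ E := le_add_of_nonneg_right hτ
  have hsq : MonotoneOn (fun x => v x ^ 2) (Icc T E) :=
    monotoneOn_sq_of_mul_deriv_nonneg hvc.continuousOn
      (fun x hx => (hv x (hT.trans hx.1)).differentiableAt)
      fun x hx => hnonneg x (Ioo_subset_Icc_self hx)
  rcases eq_or_ne (v E) 0 with hE | hE
  · have hz : ∀ t ∈ Icc T E, v t = 0 := fun t ht => by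
      have := hsq ht ⟨hTE, le_rfl⟩ ht.2
      simp only [hE] at this
      nlinarith
    obtain ⟨t, hvt, ht⟩ := (hne.and_eventually (eventually_ge_atTop T)).exists
    exact hvt (eq_zero_of_eqOn_Icc hv hvc hd hT hz t ht)
  · have hdE := hd E (by linarith)
    have hsign : 0 ≤ v (d E) * v E := mul_nonneg_of_monotoneOn_sq hdE.2 hvc.continuousOn
      (hsq.mono (Icc_subset_Icc (by linarith [hdE.1]) le_rfl))
    have hEE := hnonneg E ⟨hTE, le_rfl⟩
    rw [(hv E (by linarith)).deriv] at hEE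
    nlinarith [mul_neg_of_neg_of_pos hμ (pow_pos (abs_pos.2 hE) 2), sq_abs (v E),
      mul_nonpos_of_nonpos_of_nonneg hσ hsign]

end BoundedDelay

lemma forall_extrema_and_mul_deriv_neg_iff (hv : HasLinearDelayDeriv μ σ d t₀ v)
    (hvc : Continuous v) (hd : ∀ t > t₀, d t ∈ Icc (t - τ) t) (hμ : μ < 0) (hσ : σ ≤ 0) :
    (∀ T > t₀, (∃ T₁ > T, IsLocalMax v T₁ ∧ 0 < v T₁) ∧ (∃ T₂ > T, IsLocalMin v T₂ ∧ v T₂ < 0) ∧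
        (∃ t ∈ Icc T (T + τ), v t * deriv v t < 0)) ↔
      (∃ᶠ t in atTop, 0 < v t) ∧ ∃ᶠ t in atTop, v t < 0 := by
  constructor
  · intro h
    refine ⟨frequently_atTop'.2 fun T => ?_, frequently_atTop'.2 fun T => ?_⟩
    · obtain ⟨T₁, hT₁, -, hv₁⟩ := (h (max T t₀ + 1) (by linarith [le_max_right T t₀])).1
      exact ⟨T₁, by linarith [le_max_left T t₀], hv₁⟩
    · obtain ⟨T₂, hT₂, -, hv₂⟩ := (h (max T t₀ + 1) (by linarith [le_max_right T t₀])).2.1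
      exact ⟨T₂, by linarith [le_max_left T t₀], hv₂⟩
  · rintro ⟨hpos, hneg⟩ T hT
    exact ⟨exists_isLocalMax_pos hvc hpos hneg T, exists_isLocalMin_neg hvc hpos hneg T,
      exists_mul_deriv_neg hv hvc hd hμ hσ (hpos.mono fun t ht => ht.ne') hT⟩

end HasLinearDelayDeriv

lemma mul_Mzero {a c : ℝ} (hc : c ≠ 0) : c * Mzero a c = -a := by
  unfold Mzero
  field_simp

lemma mul_add_mul_Mzero_nonpos {a c μ σ N : ℝ} (hc : 0 < c) (hμ : μ < 0)
    (hN : Nzero a c μ σ ≤ N) : μ * N + σ * Mzero a c ≤ 0 := by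
  have h₁ : μ * Nzero a c μ σ = a * σ / c := by
    unfold Nzero
    field_simp [hμ.ne]
  have h₂ : σ * Mzero a c = -(a * σ / c) := by
    unfold Mzero
    ring
  linarith [mul_le_mul_of_nonpos_left hN hμ.le]

lemma delay_mem_Icc {a c N x t : ℝ} (hc : 0 < c) (hlow : Mzero a c ≤ x) (hup : x ≤ N) :
    t - a - c * x ∈ Icc (t - (a + c * N)) t := by
  have h₁ := mul_le_mul_of_nonneg_left hup hc.le
  have h₂ := mul_le_mul_of_nonneg_left hlow hc.le
  rw [mul_Mzero hc.ne'] at h₂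
  constructor <;> linarith

namespace IsSDDESolution

variable {a c μ σ N : ℝ} {φ u : ℝ → ℝ}

lemma hasLinearDelayDeriv (hu : IsSDDESolution a c μ σ φ u) :
    HasLinearDelayDeriv μ σ (fun t => t - a - c * u t) 0 u :=
  hu.2.2.2

lemma hasDerivWithinAt_Ici (hu : IsSDDESolution a c μ σ φ u) {t : ℝ} (ht : 0 ≤ t) :
    HasDerivWithinAt u (μ * u t + σ * u (t - a - c * u t)) (Ici t) t :=
  hu.hasLinearDelayDeriv.hasDerivWithinAt_Ici hu.1 (by have := hu.1; fun_prop) ht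

lemma Mzero_le (hu : IsSDDESolution a c μ σ φ u) (ha : 0 < a) (hc : 0 < c) (hμσ : μ + σ < 0)
    (h₀ : Mzero a c ≤ u 0) : ∀ t ≥ 0, Mzero a c ≤ u t := by
  have hM : Mzero a c < 0 := div_neg_of_neg_of_pos (neg_neg_of_pos ha) hc
  have hneg := le_of_deriv_right_lt_deriv_boundary_Ici (f := fun t => -u t)
    (B := fun _ => -Mzero a c) (B' := 0) hu.1.neg (fun x hx => (hu.hasDerivWithinAt_Ici hx).neg)
    (fun x => hasDerivAt_const x _) (neg_le_neg h₀) fun x _ hx => ?_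
  · exact fun t ht => neg_le_neg_iff.1 (hneg t ht)
  -- where `u` touches `M₀` the delay vanishes, so there `u' = (μ + σ) M₀ > 0`
  rw [neg_inj] at hx
  rw [hx, mul_Mzero hc.ne', sub_neg_eq_add, sub_add_cancel, hx, Pi.zero_apply]
  nlinarith

lemma le_add_div (hu : IsSDDESolution a c μ σ φ u) (hc : 0 < c) (hμ : μ < 0) (hσ : σ ≤ 0)
    (hN : Nzero a c μ σ ≤ N) (h₀ : u 0 ≤ N) (hτ : Mzero a c ≤ u (-(a + c * N))) :
    ∀ t ≥ 0, u t ≤ N + t / c := by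
  refine le_of_deriv_right_lt_deriv_boundary_Ici (B' := fun _ => 1 / c) hu.1
    (fun x hx => hu.hasDerivWithinAt_Ici hx) (fun x => ((hasDerivAt_id x).div_const c).const_add N)
    (by simpa using h₀) fun x hx hux => ?_
  have hdelay : x - a - c * u x = -(a + c * N) := by
    rw [hux]
    field_simp
    ring
  rw [hdelay]
  have h₁ : μ * u x ≤ μ * N :=
    mul_le_mul_of_nonpos_left (by rw [hux]; linarith [div_nonneg hx hc.le]) hμ.le
  have h₂ := mul_le_mul_of_nonpos_left hτ hσ
  linarith [mul_add_mul_Mzero_nonpos hc hμ hN, one_div_pos.2 hc]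

lemma le_of_Nzero_le (hu : IsSDDESolution a c μ σ φ u) (hc : 0 < c) (hμ : μ < 0) (hσ : σ ≤ 0)
    (hN : Nzero a c μ σ ≤ N) (h₀ : u 0 ≤ N) (hlow : ∀ s ≥ -(a + c * N), Mzero a c ≤ u s) :
    ∀ t ≥ 0, u t ≤ N := by
  have hbarrier := hu.le_add_div hc hμ hσ hN h₀ (hlow _ le_rfl)
  intro t ht
  refine le_of_forall_sub_le fun ε hε => ?_
  have hε' := le_of_deriv_right_lt_deriv_boundary_Ici (B := fun _ => N + ε) (B' := 0) hu.1
    (fun x hx => hu.hasDerivWithinAt_Ici hx) (fun x => hasDerivAt_const x _) (by linarith)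
    (fun x hx hux => ?_) t ht
  · linarith
  have hdx : -(a + c * N) ≤ x - a - c * u x := by
    have := mul_le_mul_of_nonneg_left (hbarrier x hx) hc.le
    rw [mul_add, mul_div_cancel₀ _ hc.ne'] at this
    linarith
  have h₁ := mul_le_mul_of_nonpos_left (hlow _ hdx) hσ
  have h₂ : μ * u x = μ * N + μ * ε := by rw [hux]; ring
  show μ * u x + σ * u (x - a - c * u x) < 0
  nlinarith [mul_add_mul_Mzero_nonpos hc hμ hN]

end IsSDDESolution

theorem sdde_solution_dichotomy_general
    (a c μ σ N τ : ℝ) (φ u : ℝ → ℝ)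
    (ha : 0 < a) (hc : 0 < c) (hμ : μ < 0) (hσ : σ < 0)
    (hN : N = max (Nzero a c μ σ) (φ 0)) (hτ : τ = a + c * N)
    (hφ : ∀ t ∈ Set.Icc (-τ) (0:ℝ), Mzero a c ≤ φ t)
    (hu : IsSDDESolution a c μ σ φ u) :
    Xor'
      (∃ T ≥ (0:ℝ), (MonotoneOn u (Set.Ici T) ∨ AntitoneOn u (Set.Ici T)) ∧
        Filter.Tendsto u Filter.atTop (nhds 0))
      (∀ T > (0:ℝ),
        (∃ T₁ > T, IsLocalMax u T₁ ∧ 0 < u T₁) ∧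
        (∃ T₂ > T, IsLocalMin u T₂ ∧ u T₂ < 0) ∧
        (∃ t ∈ Set.Icc T (T + τ), u t * deriv u t < 0)) := by
  have hN₀ : Nzero a c μ σ ≤ N := hN ▸ le_max_left _ _
  have hτ₀ : 0 < τ := by
    have : 0 < Nzero a c μ σ :=
      div_pos_of_neg_of_neg (mul_neg_of_pos_of_neg ha hσ) (mul_neg_of_pos_of_neg hc hμ)
    rw [hτ]
    nlinarith
  have hlow : ∀ t ≥ -τ, Mzero a c ≤ u t := by
    have hlow₀ := hu.Mzero_le ha hc (by linarith) (hu.2.1 0 le_rfl ▸ hφ 0 ⟨by linarith, le_rfl⟩)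
    intro t ht
    rcases le_or_gt t 0 with h | h
    · exact hu.2.1 t h ▸ hφ t ⟨ht, h⟩
    · exact hlow₀ t h.le
  have hup := hu.le_of_Nzero_le hc hμ hσ.le hN₀ (hu.2.1 0 le_rfl ▸ hN ▸ le_max_right _ _)
    (hτ ▸ hlow)
  have hd : ∀ t > 0, t - a - c * u t ∈ Icc (t - τ) t := fun t ht =>
    hτ ▸ delay_mem_Icc hc (hlow t (by linarith)) (hup t ht.le)
  have hv := hu.hasLinearDelayDeriv
  refine xor_iff_iff_not.2 ?_
  rw [hv.exists_monotoneOn_tendsto_zero_iff hu.1 (fun t ht => (hd t ht).1) hτ₀.le hμ hσ.le,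
    hv.forall_extrema_and_mul_deriv_neg_iff hu.1 hd hμ hσ.le]

/-- Solution dichotomy: eventual monotone convergence to `0`, or oscillation forever. -/
theorem sdde_solution_dichotomy
    (a c μ σ N τ : ℝ) (φ u : ℝ → ℝ)
    (ha : 0 < a) (hc : 0 < c) (hμ : μ < 0) (hσ : σ < 0)
    (hN : N = max (Nzero a c μ σ) (φ 0)) (hτ : τ = a + c * N)
    (hφcont : Continuous φ)
    (hφ : ∀ t ∈ Set.Icc (-τ) (0:ℝ), Mzero a c ≤ φ t)
    (hu : IsSDDESolution a c μ σ φ u) :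
    Xor'
      (∃ T ≥ (0:ℝ), (MonotoneOn u (Set.Ici T) ∨ AntitoneOn u (Set.Ici T)) ∧
        Filter.Tendsto u Filter.atTop (nhds 0))
      (∀ T > (0:ℝ),
        (∃ T₁ > T, IsLocalMax u T₁ ∧ 0 < u T₁) ∧
        (∃ T₂ > T, IsLocalMin u T₂ ∧ u T₂ < 0) ∧
        (∃ t ∈ Set.Icc T (T + τ), u t * deriv u t < 0)) :=
  sdde_solution_dichotomy_general a c μ σ N τ φ u ha hc hμ hσ hN hτ hφ hu
end

section
/- (Negative root of Q₁.) Let a > 0, c > 0 and σ ≤ μ < 0, and let x ∈ (0, N₀]. Then there exists m ∈ [max{M₀, −σx/μ}, 0) such that Q₁(v, x) < 0 for all v < m, Q₁(m, x) = 0, and Q₁(v, x) > 0 for all v ∈ (m, 0]. -/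
open Real Set Filter

/-- `Q₁(v,x) = (1 + (μ/σ) e^{μ(a+cv)}) v + (σ/μ) x (1 - e^{μ(a+cv)})`. -/
noncomputable def Qone (a c μ σ v x : ℝ) : ℝ :=
  (1 + (μ / σ) * Real.exp (μ * (a + c * v))) * v +
    (σ / μ) * x * (1 - Real.exp (μ * (a + c * v)))

/-!
For `v ≤ 0` the derivative of `v ↦ Q₁(v, x)` is at least `1`, so `Q₁(·, x)` is strictly
increasing on `(-∞, 0]`. It is negative at `M₀` (where the exponential equals `1`) and at
`-σx/μ` (where the terms without an exponential cancel), and positive at `0` because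
`e^{μa} < 1`. The intermediate value theorem then produces the unique root `m`.
-/

theorem exists_zero_of_strictMonoOn_Iic {f : ℝ → ℝ} {l b : ℝ} (hlb : l ≤ b)
    (hf : ContinuousOn f (Icc l b)) (hmono : StrictMonoOn f (Iic b))
    (hl : f l < 0) (hb : 0 < f b) :
    ∃ m ∈ Ico l b, (∀ v < m, f v < 0) ∧ f m = 0 ∧ ∀ v ∈ Ioc m b, 0 < f v := by
  obtain ⟨m, ⟨hlm, hmb⟩, hfm⟩ := intermediate_value_Icc hlb hf ⟨hl.le, hb.le⟩
  have hmb' : m < b := hmb.lt_of_ne (by rintro rfl; exact hb.ne' hfm)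
  refine ⟨m, ⟨hlm, hmb'⟩, fun v hv => ?_, hfm, fun v hv => ?_⟩
  · exact hfm ▸ hmono (hv.trans hmb').le hmb'.le hv
  · exact hfm ▸ hmono hmb'.le hv.2 hv.1

section Qone

variable {a c μ σ x : ℝ}

theorem continuous_Qone : Continuous fun v => Qone a c μ σ v x := by
  unfold Qone
  fun_prop

theorem hasDerivAt_Qone (v : ℝ) :
    HasDerivAt (fun v => Qone a c μ σ v x)
      (1 + μ / σ * exp (μ * (a + c * v)) * (1 + μ * c * v)
        - σ / μ * x * exp (μ * (a + c * v)) * (μ * c)) v := by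
  have hexp : HasDerivAt (fun v => exp (μ * (a + c * v))) (exp (μ * (a + c * v)) * (μ * c)) v :=
    (((hasDerivAt_id v).const_mul c).const_add a |>.const_mul μ |>.exp).congr_deriv (by simp only [id]; ring)
  have hsum := ((hexp.const_mul (μ / σ)).const_add 1).mul (hasDerivAt_id v) |>.add
    ((hasDerivAt_const v (1 : ℝ)).sub hexp |>.const_mul (σ / μ * x))
  exact hsum.congr_deriv (by simp only [id]; ring)

theorem strictMonoOn_Qone_Iic (hc : 0 ≤ c) (hμ : μ ≤ 0) (hσ : σ ≤ 0) (hx : 0 ≤ x) :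
    StrictMonoOn (fun v => Qone a c μ σ v x) (Iic 0) := by
  refine strictMonoOn_of_deriv_pos (convex_Iic 0) continuous_Qone.continuousOn fun v hv => ?_
  rw [interior_Iic, mem_Iio] at hv
  rw [(hasDerivAt_Qone v).deriv]
  have hμσ : 0 ≤ μ / σ := div_nonneg_of_nonpos hμ hσ
  have hσμ : 0 ≤ σ / μ := div_nonneg_of_nonpos hσ hμ
  have hμc : μ * c ≤ 0 := mul_nonpos_of_nonpos_of_nonneg hμ hc
  have hgrow : 0 ≤ μ / σ * exp (μ * (a + c * v)) * (1 + μ * c * v) :=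
    mul_nonneg (by positivity) (by nlinarith)
  have hshift : σ / μ * x * exp (μ * (a + c * v)) * (μ * c) ≤ 0 :=
    mul_nonpos_of_nonneg_of_nonpos (by positivity) hμc
  linarith

theorem Qone_Mzero (hc : c ≠ 0) : Qone a c μ σ (Mzero a c) x = (1 + μ / σ) * Mzero a c := by
  have hroot : μ * (a + c * Mzero a c) = 0 := by
    rw [Mzero, mul_div_cancel₀ _ hc]; ring
  rw [Qone, hroot, exp_zero]
  ring

theorem Qone_neg_mul_div (hμ : μ ≠ 0) (hσ : σ ≠ 0) :
    Qone a c μ σ (-σ * x / μ) x = (1 + μ / σ) * exp (μ * (a + c * (-σ * x / μ))) * (-σ * x / μ) := by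
  unfold Qone
  field_simp
  ring

theorem Qone_zero : Qone a c μ σ 0 x = σ / μ * x * (1 - exp (μ * a)) := by
  simp [Qone]

theorem Qone_max_neg (ha : 0 < a) (hc : 0 < c) (hμ : μ < 0) (hσ : σ < 0) (hx : 0 < x) :
    Qone a c μ σ (max (Mzero a c) (-σ * x / μ)) x < 0 := by
  have hμσ : 0 < 1 + μ / σ := by linarith [div_pos_of_neg_of_neg hμ hσ]
  rcases max_choice (Mzero a c) (-σ * x / μ) with h | h <;> rw [h]
  · rw [Qone_Mzero hc.ne']
    exact mul_neg_of_pos_of_neg hμσ (div_neg_of_neg_of_pos (neg_neg_of_pos ha) hc)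
  · rw [Qone_neg_mul_div hμ.ne hσ.ne]
    exact mul_neg_of_pos_of_neg (by positivity)
      (div_neg_of_pos_of_neg (mul_pos (neg_pos.mpr hσ) hx) hμ)

theorem Qone_zero_pos (ha : 0 < a) (hμ : μ < 0) (hσ : σ < 0) (hx : 0 < x) :
    0 < Qone a c μ σ 0 x := by
  rw [Qone_zero]
  have : exp (μ * a) < 1 := exp_lt_one_iff.mpr (mul_neg_of_neg_of_pos hμ ha)
  have := div_pos_of_neg_of_neg hσ hμ
  have : 0 < 1 - exp (μ * a) := by linarith
  positivity

end Qone

/-- Negative root of `Q₁`. -/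
theorem Qone_negative_root
    (a c μ σ x : ℝ)
    (ha : 0 < a) (hc : 0 < c) (hσμ : σ ≤ μ) (hμ : μ < 0)
    (hx : x ∈ Set.Ioc (0:ℝ) (Nzero a c μ σ)) :
    ∃ m ∈ Set.Ico (max (Mzero a c) (-σ * x / μ)) (0:ℝ),
      (∀ v < m, Qone a c μ σ v x < 0) ∧
      Qone a c μ σ m x = 0 ∧
      (∀ v ∈ Set.Ioc m (0:ℝ), 0 < Qone a c μ σ v x) := by
  obtain ⟨hx0, -⟩ := hx
  have hσ : σ < 0 := hσμ.trans_lt hμ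
  have hmax : max (Mzero a c) (-σ * x / μ) ≤ 0 :=
    max_le (div_nonpos_of_nonpos_of_nonneg (neg_nonpos.mpr ha.le) hc.le)
      (div_nonpos_of_nonneg_of_nonpos (mul_nonneg (neg_nonneg.mpr hσ.le) hx0.le) hμ.le)
  exact exists_zero_of_strictMonoOn_Iic hmax continuous_Qone.continuousOn
    (strictMonoOn_Qone_Iic hc.le hμ.le hσ.le hx0.le)
    (Qone_max_neg ha hc hμ hσ hx0) (Qone_zero_pos ha hμ hσ hx0)
end

section
/- (Monotonicity of the negative root of Q₁.) Let a > 0, c > 0 and σ ≤ μ < 0. Suppose 0 ≤ x₁ ≤ x₂ ≤ N₀ and m₁, m₂ ∈ [M₀, 0] satisfy Q₁(m₁, x₁) = 0 and Q₁(m₂, x₂) = 0. Then m₂ ≤ m₁. -/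
open Real Set Filter

/-! For `v ≤ 0` the map `v ↦ Q₁(v, x)` is strictly increasing: `v` increases, the exponential
`e^{μ(a + c v)}` decreases, and `e^{μ(a + c v)} · v` is a product of a positive decreasing and a
nonpositive increasing factor. For `v ≥ M₀` the exponent is nonpositive, so `Q₁(v, ·)` is
monotone. Hence `Q₁(m₂, x₁) ≤ Q₁(m₂, x₂) = 0 = Q₁(m₁, x₁)`, and `m₂ ≤ m₁`. -/

lemma add_mul_nonneg_of_Mzero_le {a c v : ℝ} (hc : 0 < c) (hv : Mzero a c ≤ v) :
    0 ≤ a + c * v := by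
  rw [Mzero, div_le_iff₀ hc] at hv
  linarith

lemma Qone_strictMonoOn_Iic {a c μ σ x : ℝ} (hc : 0 ≤ c) (hμ : μ < 0) (hσ : σ < 0)
    (hx : 0 ≤ x) : StrictMonoOn (fun v => Qone a c μ σ v x) (Iic 0) := by
  intro u hu v hv huv
  have hexp : exp (μ * (a + c * v)) ≤ exp (μ * (a + c * u)) :=
    exp_le_exp.mpr (by nlinarith [mul_nonneg (neg_nonneg.mpr hμ.le) hc])
  have hprod : exp (μ * (a + c * u)) * u < exp (μ * (a + c * v)) * v := by
    nlinarith [exp_pos (μ * (a + c * v)), mem_Iic.mp hu]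
  have hμσ : 0 < μ / σ := div_pos_of_neg_of_neg hμ hσ
  have hσμ : 0 < σ / μ := div_pos_of_neg_of_neg hσ hμ
  simp only [Qone]
  nlinarith [mul_lt_mul_of_pos_left hprod hμσ, mul_nonneg hσμ.le hx]

lemma Qone_monotone_right {a c μ σ v : ℝ} (hμ : μ < 0) (hσ : σ < 0) (hv : 0 ≤ a + c * v) :
    Monotone (Qone a c μ σ v) := by
  intro x₁ x₂ hx
  have hexp : exp (μ * (a + c * v)) ≤ 1 :=
    exp_le_one_iff.mpr (mul_nonpos_of_nonpos_of_nonneg hμ.le hv)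
  have hσμ : 0 < σ / μ := div_pos_of_neg_of_neg hσ hμ
  simp only [Qone]
  nlinarith [mul_nonneg (mul_nonneg hσμ.le (sub_nonneg.mpr hx)) (sub_nonneg.mpr hexp)]

theorem Qone_negative_root_antitone_general
    (a c μ σ x₁ x₂ m₁ m₂ : ℝ)
    (hc : 0 < c) (hσμ : σ ≤ μ) (hμ : μ < 0)
    (hx1 : 0 ≤ x₁) (hx12 : x₁ ≤ x₂)
    (hm1 : m₁ ∈ Set.Icc (Mzero a c) (0:ℝ)) (hm2 : m₂ ∈ Set.Icc (Mzero a c) (0:ℝ))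
    (hQ1 : Qone a c μ σ m₁ x₁ = 0) (hQ2 : Qone a c μ σ m₂ x₂ = 0) :
    m₂ ≤ m₁ := by
  have hσ : σ < 0 := hσμ.trans_lt hμ
  have hQ : Qone a c μ σ m₂ x₁ ≤ Qone a c μ σ m₁ x₁ :=
    calc Qone a c μ σ m₂ x₁ ≤ Qone a c μ σ m₂ x₂ :=
          Qone_monotone_right hμ hσ (add_mul_nonneg_of_Mzero_le hc hm2.1) hx12
      _ = Qone a c μ σ m₁ x₁ := hQ2.trans hQ1.symm
  exact ((Qone_strictMonoOn_Iic hc.le hμ hσ hx1).le_iff_le hm2.2 hm1.2).mp hQ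

/-- Monotonicity of the negative root of `Q₁`. -/
theorem Qone_negative_root_antitone
    (a c μ σ x₁ x₂ m₁ m₂ : ℝ)
    (ha : 0 < a) (hc : 0 < c) (hσμ : σ ≤ μ) (hμ : μ < 0)
    (hx1 : 0 ≤ x₁) (hx12 : x₁ ≤ x₂) (hx2 : x₂ ≤ Nzero a c μ σ)
    (hm1 : m₁ ∈ Set.Icc (Mzero a c) (0:ℝ)) (hm2 : m₂ ∈ Set.Icc (Mzero a c) (0:ℝ))
    (hQ1 : Qone a c μ σ m₁ x₁ = 0) (hQ2 : Qone a c μ σ m₂ x₂ = 0) :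
    m₂ ≤ m₁ :=
  Qone_negative_root_antitone_general a c μ σ x₁ x₂ m₁ m₂ hc hσμ hμ hx1 hx12 hm1 hm2 hQ1 hQ2
end

section
/- (Positive root of Q₁.) Let a > 0, c > 0 and σ ≤ μ < 0, and let x ∈ [M₀, 0). Then there exists n ∈ (0, −σx/μ) such that Q₁(v, x) < 0 for all v ∈ [0, n), Q₁(n, x) = 0, and Q₁(v, x) > 0 for all v > n. -/
open Real Set Filter

/-!
With `p = -σx/μ`, `B = μ/σ ∈ (0, 1]`, `α = μa < 0` and `β = μc`, one has
`Q₁(v, x) = v - p + e^{α + βv} (Bv + p)`, which is positive for `v ≥ p`. On `[0, p)` it equals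
`(p - v) (e^{-h(v)} - 1)` with `h(v) = log (p - v) - log (Bv + p) - α - βv`, so its sign is that
of `-h`. Since `B ≤ 1`, the product `(p - v)(Bv + p)` decreases on `[0, p)`, hence
`h' = -p(1 + B) / ((p - v)(Bv + p)) - β` decreases and `h` is concave. As `h(0) = -α > 0`,
the concave `h` changes sign exactly once, at the root `n ∈ (0, p)` that the intermediate value
theorem provides for `Q₁`.
-/

theorem ConcaveOn.pos_of_mem_Ico_of_eq_zero {s : Set ℝ} {f : ℝ → ℝ} (hf : ConcaveOn ℝ s f)
    {a b y : ℝ} (ha : a ∈ s) (hb : b ∈ s) (hfa : 0 < f a) (hfb : f b = 0)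
    (hy : y ∈ Ico a b) : 0 < f y := by
  rcases hy.1.eq_or_lt with rfl | hay
  · exact hfa
  rcases lt_or_ge (f y) (f a) with hlt | hge
  · have hmem : y ∈ openSegment ℝ b a := by
      rw [openSegment_symm, openSegment_eq_Ioo (hay.trans hy.2)]; exact ⟨hay, hy.2⟩
    simpa [hfb] using hf.left_lt_of_lt_right hb ha hmem hlt
  · exact hfa.trans_le hge

theorem ConcaveOn.neg_of_lt_of_eq_zero {s : Set ℝ} {f : ℝ → ℝ} (hf : ConcaveOn ℝ s f)
    {a b y : ℝ} (ha : a ∈ s) (hy : y ∈ s) (hfa : 0 < f a) (hfb : f b = 0) (hab : a < b)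
    (hby : b < y) : f y < 0 := by
  have hmem : b ∈ openSegment ℝ a y := by
    rw [openSegment_eq_Ioo (hab.trans hby)]; exact ⟨hab, hby⟩
  simpa [hfb] using hf.lt_right_of_left_lt ha hy hmem (hfb ▸ hfa)

noncomputable def reducedQ (p B α β v : ℝ) : ℝ := v - p + exp (α + β * v) * (B * v + p)

noncomputable def logDefect (p B α β v : ℝ) : ℝ :=
  log (p - v) - log (B * v + p) - (α + β * v)

theorem Qone_eq_reducedQ (a c μ σ v x : ℝ) :
    Qone a c μ σ v x = reducedQ (-σ * x / μ) (μ / σ) (μ * a) (μ * c) v := by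
  rw [Qone, reducedQ, mul_add μ, ← mul_assoc]
  ring

section
variable {p B α β : ℝ}

theorem reducedQ_eq_mul_logDefect (hB : 0 ≤ B) {v : ℝ} (hv : v ∈ Ico 0 p) :
    reducedQ p B α β v = (p - v) * (exp (-logDefect p B α β v) - 1) := by
  obtain ⟨hv₀, hvp⟩ := hv
  have hpv : 0 < p - v := sub_pos.2 hvp
  have hBv : 0 < B * v + p := by linarith [mul_nonneg hB hv₀]
  rw [logDefect, neg_sub, exp_sub, exp_sub, exp_log hpv, exp_log hBv, reducedQ]
  field_simp
  ring

theorem hasDerivAt_logDefect (hB : 0 ≤ B) {v : ℝ} (hv : v ∈ Ico 0 p) :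
    HasDerivAt (logDefect p B α β) (-1 / (p - v) - B / (B * v + p) - β) v := by
  obtain ⟨hv₀, hvp⟩ := hv
  have hpv : p - v ≠ 0 := (sub_pos.2 hvp).ne'
  have hBv : B * v + p ≠ 0 := by linarith [mul_nonneg hB hv₀]
  have := ((((hasDerivAt_id v).const_sub p).log hpv).sub
    ((((hasDerivAt_id v).const_mul B).add_const p).log hBv)).sub
    (((hasDerivAt_id v).const_mul β).const_add α)
  exact this.congr_deriv (by simp)

theorem concaveOn_logDefect (hB₀ : 0 ≤ B) (hB₁ : B ≤ 1) :
    ConcaveOn ℝ (Ico 0 p) (logDefect p B α β) := by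
  have hderiv := fun v (hv : v ∈ Ico 0 p) => hasDerivAt_logDefect (α := α) (β := β) hB₀ hv
  refine AntitoneOn.concaveOn_of_deriv (convex_Ico 0 p)
    (fun v hv => (hderiv v hv).continuousAt.continuousWithinAt) ?_ ?_ <;> rw [interior_Ico]
  · exact fun v hv =>
      (hderiv v (Ioo_subset_Ico_self hv)).differentiableAt.differentiableWithinAt
  intro u ⟨hu₀, hup⟩ w ⟨hw₀, hwp⟩ huw
  rw [(hderiv u ⟨hu₀.le, hup⟩).deriv, (hderiv w ⟨hw₀.le, hwp⟩).deriv]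
  have hp : 0 < p := hu₀.trans hup
  have hsum : ∀ v ∈ Ioo 0 p,
      1 / (p - v) + B / (B * v + p) = p * (1 + B) / ((p - v) * (B * v + p)) := by
    intro v ⟨hv₀, hvp⟩
    have : 0 < B * v + p := by linarith [mul_nonneg hB₀ hv₀.le]
    field_simp [(sub_pos.2 hvp).ne', this.ne']
    ring
  -- `(p - v) (B v + p)` is a downward parabola with vertex at `v = (B - 1) p / (2B) ≤ 0`
  have hprod : (p - w) * (B * w + p) ≤ (p - u) * (B * u + p) := by
    have hslope : 0 ≤ B * (u + w) + p * (1 - B) := by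
      have := mul_nonneg hp.le (sub_nonneg.2 hB₁)
      have := mul_nonneg hB₀ (add_nonneg hu₀.le hw₀.le)
      linarith
    nlinarith [mul_nonneg (sub_nonneg.2 huw) hslope]
  suffices 1 / (p - u) + B / (B * u + p) ≤ 1 / (p - w) + B / (B * w + p) by
    simp only [neg_div]; linarith
  rw [hsum u ⟨hu₀, hup⟩, hsum w ⟨hw₀, hwp⟩]
  have : 0 < B * w + p := by linarith [mul_nonneg hB₀ hw₀.le]
  have : 0 < p - w := sub_pos.2 hwp
  gcongr

theorem reducedQ_neg_of_logDefect_pos (hB : 0 ≤ B) {v : ℝ} (hv : v ∈ Ico 0 p)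
    (h : 0 < logDefect p B α β v) : reducedQ p B α β v < 0 := by
  rw [reducedQ_eq_mul_logDefect hB hv]
  exact mul_neg_of_pos_of_neg (sub_pos.2 hv.2)
    (sub_neg.2 (exp_lt_one_iff.2 (neg_lt_zero.2 h)))

theorem reducedQ_pos_of_logDefect_neg (hB : 0 ≤ B) {v : ℝ} (hv : v ∈ Ico 0 p)
    (h : logDefect p B α β v < 0) : 0 < reducedQ p B α β v := by
  rw [reducedQ_eq_mul_logDefect hB hv]
  exact mul_pos (sub_pos.2 hv.2) (sub_pos.2 (one_lt_exp_iff.2 (neg_pos.2 h)))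

theorem reducedQ_pos_of_le (hp : 0 < p) (hB : 0 ≤ B) {v : ℝ} (hv : p ≤ v) :
    0 < reducedQ p B α β v := by
  have : 0 < exp (α + β * v) * (B * v + p) := by
    have := mul_nonneg hB (hp.le.trans hv)
    positivity
  rw [reducedQ]
  linarith

theorem exists_root_reducedQ (hp : 0 < p) (hB₀ : 0 ≤ B) (hB₁ : B ≤ 1) (hα : α < 0) :
    ∃ n ∈ Ioo 0 p, (∀ v ∈ Ico 0 n, reducedQ p B α β v < 0) ∧
      reducedQ p B α β n = 0 ∧ ∀ v > n, 0 < reducedQ p B α β v := by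
  have h₀ : 0 < logDefect p B α β 0 := by simp [logDefect]; linarith
  have hQ₀ := reducedQ_neg_of_logDefect_pos hB₀ ⟨le_rfl, hp⟩ h₀
  have hQp := reducedQ_pos_of_le (α := α) (β := β) hp hB₀ le_rfl
  obtain ⟨n, ⟨hn₀, hnp⟩, hQn⟩ :=
    intermediate_value_Icc hp.le (by unfold reducedQ; fun_prop) ⟨hQ₀.le, hQp.le⟩
  replace hn₀ : 0 < n := hn₀.lt_of_ne (by rintro rfl; exact hQ₀.ne hQn)
  replace hnp : n < p := hnp.lt_of_ne (by rintro rfl; exact hQp.ne' hQn)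
  have hn : logDefect p B α β n = 0 := by
    rw [reducedQ_eq_mul_logDefect hB₀ ⟨hn₀.le, hnp⟩] at hQn
    simpa [(sub_pos.2 hnp).ne', sub_eq_zero] using hQn
  have hconc := concaveOn_logDefect (p := p) (α := α) (β := β) hB₀ hB₁
  refine ⟨n, ⟨hn₀, hnp⟩, fun v hv => ?_, hQn, fun v hv => ?_⟩
  · exact reducedQ_neg_of_logDefect_pos hB₀ ⟨hv.1, hv.2.trans hnp⟩
      (hconc.pos_of_mem_Ico_of_eq_zero ⟨le_rfl, hp⟩ ⟨hn₀.le, hnp⟩ h₀ hn hv)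
  rcases lt_or_ge v p with hvp | hpv
  · have hvI : v ∈ Ico 0 p := ⟨(hn₀.trans hv).le, hvp⟩
    exact reducedQ_pos_of_logDefect_neg hB₀ hvI
      (hconc.neg_of_lt_of_eq_zero ⟨le_rfl, hp⟩ hvI h₀ hn hn₀ hv)
  · exact reducedQ_pos_of_le hp hB₀ hpv

end

theorem Qone_positive_root_general
    (a c μ σ x : ℝ)
    (ha : 0 < a) (hσμ : σ ≤ μ) (hμ : μ < 0)
    (hx : x ∈ Set.Ico (Mzero a c) (0:ℝ)) :
    ∃ n ∈ Set.Ioo (0:ℝ) (-σ * x / μ),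
      (∀ v ∈ Set.Ico (0:ℝ) n, Qone a c μ σ v x < 0) ∧
      Qone a c μ σ n x = 0 ∧
      (∀ v > n, 0 < Qone a c μ σ v x) := by
  have hσ : σ < 0 := hσμ.trans_lt hμ
  have hp : 0 < -σ * x / μ :=
    div_pos_of_neg_of_neg (mul_neg_of_pos_of_neg (neg_pos.2 hσ) hx.2) hμ
  simp_rw [Qone_eq_reducedQ]
  exact exists_root_reducedQ hp (div_pos_of_neg_of_neg hμ hσ).le
    ((div_le_one_of_neg hσ).2 hσμ) (mul_neg_of_neg_of_pos hμ ha)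

/-- Positive root of `Q₁`. -/
theorem Qone_positive_root
    (a c μ σ x : ℝ)
    (ha : 0 < a) (hc : 0 < c) (hσμ : σ ≤ μ) (hμ : μ < 0)
    (hx : x ∈ Set.Ico (Mzero a c) (0:ℝ)) :
    ∃ n ∈ Set.Ioo (0:ℝ) (-σ * x / μ),
      (∀ v ∈ Set.Ico (0:ℝ) n, Qone a c μ σ v x < 0) ∧
      Qone a c μ σ n x = 0 ∧
      (∀ v > n, 0 < Qone a c μ σ v x) :=
  Qone_positive_root_general a c μ σ x ha hσμ hμ hx
end

section
/- (Monotonicity of the positive root of Q₁.) Let a > 0, c > 0 and σ ≤ μ < 0. Suppose M₀ ≤ x₁ ≤ x₂ ≤ 0 and n₁, n₂ ∈ [0, N₀] satisfy Q₁(n₁, x₁) = 0 and Q₁(n₂, x₂) = 0. Then n₂ ≤ n₁. -/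
open Real Set Filter

/-!
For `v ≥ 0` the exponent `μ (a + c v)` is negative, so `Q₁(v, x) = 0` can be solved for `x`:
with `k = μ / σ ∈ (0, 1]`, `w = -μ (a + c v)` and `w₀ = -μ a > 0` it reads
`σ c x = (w - w₀) (eʷ + k) / (eʷ - 1)`. The right-hand side is strictly increasing on `w ≥ w₀`,
because its derivative has the sign of `(eʷ + k) (eʷ - 1) - (w - w₀) (1 + k) eʷ`, which dominates
`(eʷ + k) (eʷ - 1) - w (1 + k) eʷ > 0`. As `w` increases with `v` and `σ c < 0`, the root `x`
strictly decreases in `v`.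
-/

noncomputable def rootProfile (k w₀ w : ℝ) : ℝ := (w - w₀) * (exp w + k) / (exp w - 1)

lemma mul_exp_lt_exp_add_mul_exp_sub_one {k w : ℝ} (hk₀ : 0 ≤ k) (hk₁ : k ≤ 1) (hw : 0 < w) :
    w * (1 + k) * exp w < (exp w + k) * (exp w - 1) := by
  -- The difference is affine in `k`; it is positive at `k = 0` since `w + 1 < exp w`,
  -- and at `k = 1` since `w < sinh w`.
  have hexp : w + 1 < exp w := add_one_lt_exp hw.ne'
  have hsinh : 2 * w < exp w - exp (-w) := by
    have := Real.self_lt_sinh_iff.2 hw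
    rw [Real.sinh_eq] at this
    linarith
  have hinv : exp w * exp (-w) = 1 := by rw [← exp_add, add_neg_cancel, exp_zero]
  have at_zero : 0 < exp w * (exp w - 1 - w) := mul_pos (exp_pos w) (by linarith)
  have at_one : 0 < exp w * (exp w - exp (-w) - 2 * w) := mul_pos (exp_pos w) (by linarith)
  nlinarith [mul_nonneg hk₀ at_one.le, mul_nonneg (sub_nonneg.2 hk₁) at_zero.le]

lemma hasDerivAt_rootProfile (k w₀ : ℝ) {w : ℝ} (hw : w ≠ 0) :
    HasDerivAt (rootProfile k w₀)
      (((exp w + k) * (exp w - 1) - (w - w₀) * (1 + k) * exp w) / (exp w - 1) ^ 2) w := by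
  have hden : exp w - 1 ≠ 0 := sub_ne_zero.2 (by simpa using hw)
  have h : HasDerivAt (fun v => (v - w₀) * ((exp v + k) / (exp v - 1))) _ w :=
    ((hasDerivAt_id w).sub_const w₀).mul
      (((hasDerivAt_exp w).add_const k).div ((hasDerivAt_exp w).sub_const 1) hden)
  convert h using 1
  · ext v
    simp only [rootProfile, mul_div_assoc]
  · simp only [id]
    field_simp
    ring

lemma strictMonoOn_rootProfile {k w₀ : ℝ} (hk₀ : 0 ≤ k) (hk₁ : k ≤ 1) (hw₀ : 0 < w₀) :
    StrictMonoOn (rootProfile k w₀) (Ici w₀) := by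
  refine strictMonoOn_of_deriv_pos (convex_Ici w₀)
    (fun w hw => (hasDerivAt_rootProfile k w₀ (hw₀.trans_le hw).ne').continuousAt.continuousWithinAt)
    fun w hw => ?_
  rw [interior_Ici] at hw
  have hw' : 0 < w := hw₀.trans hw
  rw [(hasDerivAt_rootProfile k w₀ hw'.ne').deriv]
  have hden : 0 < exp w - 1 := by linarith [add_one_lt_exp hw'.ne']
  have key := mul_exp_lt_exp_add_mul_exp_sub_one hk₀ hk₁ hw'
  have : 0 < w₀ * (1 + k) * exp w := by have := exp_pos w; positivity
  exact div_pos (by linarith) (pow_pos hden 2)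

lemma Qone_eq_zero_iff {a c μ σ v x : ℝ} (hc : c ≠ 0) (hμ : μ ≠ 0) (hσ : σ ≠ 0)
    (hv : a + c * v ≠ 0) :
    Qone a c μ σ v x = 0 ↔ x = rootProfile (μ / σ) (-μ * a) (-μ * (a + c * v)) / (σ * c) := by
  have hE : exp (μ * (a + c * v)) ≠ 1 := by simpa using mul_ne_zero hμ hv
  simp only [Qone, rootProfile, neg_mul, exp_neg]
  set E := exp (μ * (a + c * v))
  have hE₀ : E ≠ 0 := exp_ne_zero _
  have hE₁ : E⁻¹ - 1 ≠ 0 := by rwa [sub_ne_zero, ne_eq, inv_eq_one]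
  field_simp
  constructor
  · intro h
    linear_combination c * h
  · intro h
    refine mul_left_cancel₀ hc ?_
    linear_combination h

theorem Qone_positive_root_antitone_general
    (a c μ σ x₁ x₂ n₁ n₂ : ℝ)
    (ha : 0 < a) (hc : 0 < c) (hσμ : σ ≤ μ) (hμ : μ < 0)
    (hx12 : x₁ ≤ x₂)
    (hn1 : n₁ ∈ Set.Icc (0:ℝ) (Nzero a c μ σ))
    (hn2 : n₂ ∈ Set.Icc (0:ℝ) (Nzero a c μ σ))
    (hQ1 : Qone a c μ σ n₁ x₁ = 0) (hQ2 : Qone a c μ σ n₂ x₂ = 0) :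
    n₂ ≤ n₁ := by
  have hσ : σ < 0 := hσμ.trans_lt hμ
  have hk₀ : 0 ≤ μ / σ := div_nonneg_of_nonpos hμ.le hσ.le
  have hk₁ : μ / σ ≤ 1 := (div_le_one_of_neg hσ).2 hσμ
  have root_eq {n x : ℝ} (hn : 0 ≤ n) (hQ : Qone a c μ σ n x = 0) :
      x = rootProfile (μ / σ) (-μ * a) (-μ * (a + c * n)) / (σ * c) :=
    (Qone_eq_zero_iff hc.ne' hμ.ne hσ.ne (by positivity)).1 hQ
  have mem_Ici {n : ℝ} (hn : 0 ≤ n) : -μ * (a + c * n) ∈ Ici (-μ * a) := by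
    simp only [mem_Ici]
    nlinarith [mul_nonneg (neg_nonneg.2 hμ.le) (mul_nonneg hc.le hn)]
  by_contra! hlt
  have hprofile := strictMonoOn_rootProfile hk₀ hk₁ (mul_pos (neg_pos.2 hμ) ha) (mem_Ici hn1.1) (mem_Ici hn2.1)
    (by nlinarith [mul_pos (neg_pos.2 hμ) (mul_pos hc (sub_pos.2 hlt))])
  have : x₂ < x₁ := by
    rw [root_eq hn1.1 hQ1, root_eq hn2.1 hQ2, div_lt_div_right_of_neg (mul_neg_of_neg_of_pos hσ hc)]
    exact hprofile
  linarith

/-- Monotonicity of the positive root of `Q₁`. -/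
theorem Qone_positive_root_antitone
    (a c μ σ x₁ x₂ n₁ n₂ : ℝ)
    (ha : 0 < a) (hc : 0 < c) (hσμ : σ ≤ μ) (hμ : μ < 0)
    (hx1 : Mzero a c ≤ x₁) (hx12 : x₁ ≤ x₂) (hx2 : x₂ ≤ 0)
    (hn1 : n₁ ∈ Set.Icc (0:ℝ) (Nzero a c μ σ))
    (hn2 : n₂ ∈ Set.Icc (0:ℝ) (Nzero a c μ σ))
    (hQ1 : Qone a c μ σ n₁ x₁ = 0) (hQ2 : Qone a c μ σ n₂ x₂ = 0) :
    n₂ ≤ n₁ :=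
  Qone_positive_root_antitone_general a c μ σ x₁ x₂ n₁ n₂ ha hc hσμ hμ hx12 hn1 hn2 hQ1 hQ2
end
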